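/- For every integer k ≥ 3, there exist infinitely many positive integers N that are simultaneously a k-gonal number and a centered k-gonal number; that is, the set {N : ∃ n ≥ 1, ∃ m ≥ 1, N = P(n;k) = C(m;k)} is infinite. -/
import Mathlib


/-- The `n`-th `k`-gonal number: `P(n;k) = ((k-2)n² + (4-k)n)/2` (the numerator is always even). -/
def polygonal (k n : ℤ) : ℤ := ((k - 2) * n ^ 2 + (4 - k) * n) / 2

/-- The `m`-th centered `k`-gonal number: `C(m;k) = (km² - km + 2)/2` (the numerator is always even). -/
def centered (k m : ℤ) : ℤ := (k * m ^ 2 - k * m + 2) / 2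

/-- Auxiliary sequence of pairs `(n, m)` solving `P(n;k) = C(m;k)`. -/
def pcSeq (k : ℤ) : ℕ → ℤ × ℤ
  | 0 => (1, 1)
  | i + 1 =>
    let p := pcSeq k i
    ((k - 1) * p.1 + k * p.2 - (k - 2), (k - 2) * p.1 + (k - 1) * p.2 - (k - 3))

lemma polygonal_mul_two (k n : ℤ) :
    polygonal k n * 2 = (k - 2) * n ^ 2 + (4 - k) * n := by
  have hdvd : (2 : ℤ) ∣ (k - 2) * n ^ 2 + (4 - k) * n := by
    have h := Int.even_mul_succ_self (n - 1)
    obtain ⟨c, hc⟩ := h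
    exact ⟨(k - 2) * c + n, by linear_combination (k - 2) * hc⟩
  exact Int.ediv_mul_cancel hdvd

lemma centered_mul_two (k m : ℤ) :
    centered k m * 2 = k * m ^ 2 - k * m + 2 := by
  have hdvd : (2 : ℤ) ∣ k * m ^ 2 - k * m + 2 := by
    have h := Int.even_mul_succ_self (m - 1)
    obtain ⟨c, hc⟩ := h
    exact ⟨k * c + 1, by linear_combination k * hc⟩
  exact Int.ediv_mul_cancel hdvd

lemma pcSeq_prop (k : ℤ) (hk : 3 ≤ k) (i : ℕ) :
    1 ≤ (pcSeq k i).1 ∧ 1 ≤ (pcSeq k i).2 ∧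
      (k - 2) * (pcSeq k i).1 ^ 2 + (4 - k) * (pcSeq k i).1 =
        k * (pcSeq k i).2 ^ 2 - k * (pcSeq k i).2 + 2 := by
  induction i with
  | zero => simp [pcSeq]
  | succ i ih =>
    obtain ⟨hn, hm, h⟩ := ih
    refine ⟨?_, ?_, ?_⟩
    · simp only [pcSeq]; nlinarith
    · simp only [pcSeq]; nlinarith
    · simp only [pcSeq]
      linear_combination h

lemma pcSeq_fst_strictMono (k : ℤ) (hk : 3 ≤ k) :
    StrictMono fun i => (pcSeq k i).1 := by
  apply strictMono_nat_of_lt_succ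
  intro i
  obtain ⟨hn, hm, _⟩ := pcSeq_prop k hk i
  show (pcSeq k i).1 < (pcSeq k (i + 1)).1
  simp only [pcSeq]
  nlinarith

lemma polygonal_strictMonoOn (k : ℤ) (hk : 3 ≤ k) {a b : ℤ} (ha : 1 ≤ a) (hab : a < b) :
    polygonal k a < polygonal k b := by
  have h2 : polygonal k a * 2 < polygonal k b * 2 := by
    rw [polygonal_mul_two, polygonal_mul_two]
    nlinarith [mul_pos (sub_pos.mpr hab) (show (0:ℤ) < (k - 2) * (a + b) + (4 - k) by nlinarith)]
  linarith

theorem infinitely_many_polygonal_and_centered (k : ℤ) (hk : 3 ≤ k) :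
    {N : ℤ | ∃ n : ℤ, 1 ≤ n ∧ ∃ m : ℤ, 1 ≤ m ∧ N = polygonal k n ∧ N = centered k m}.Infinite := by
  have hsm : StrictMono (fun i : ℕ => polygonal k (pcSeq k i).1) := fun i j h =>
    polygonal_strictMonoOn k hk (pcSeq_prop k hk i).1 (pcSeq_fst_strictMono k hk h)
  refine Set.infinite_of_injective_forall_mem
    (f := fun i : ℕ => polygonal k (pcSeq k i).1) hsm.injective ?_
  intro i
  obtain ⟨hn, hm, h⟩ := pcSeq_prop k hk i
  refine ⟨(pcSeq k i).1, hn, (pcSeq k i).2, hm, rfl, ?_⟩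
  have : polygonal k (pcSeq k i).1 * 2 = centered k (pcSeq k i).2 * 2 := by
    rw [polygonal_mul_two, centered_mul_two, h]
  linarith
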